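/- A ring R is right self (ℵ₀,1)-injective if and only if every finitely presented cyclic left R-module is torsionless. -/

import Mathlib

/-- `R` is right self `(ℵ₀,1)`-injective: for every `n ≥ 1` and every cyclic
submodule `K` of the free right `R`-module `Rⁿ`, every right `R`-module
homomorphism `K → R` extends to `Rⁿ`.  Right modules are left `Rᵐᵒᵖ`-modules. -/
def RightSelfAleph0OneInjective (R : Type*) [Ring R] : Prop :=
  ∀ n : ℕ, 0 < n → ∀ x : Fin n → R,
    ∀ f : (Submodule.span Rᵐᵒᵖ {x} : Submodule Rᵐᵒᵖ (Fin n → R)) →ₗ[Rᵐᵒᵖ] R,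
      ∃ g : (Fin n → R) →ₗ[Rᵐᵒᵖ] R,
        ∀ k : (Submodule.span Rᵐᵒᵖ {x} : Submodule Rᵐᵒᵖ (Fin n → R)), g k.1 = f k

/-- A module is torsionless iff the natural map to its double dual is injective,
i.e. every nonzero element is separated from zero by a linear form. -/
def Torsionless (R : Type*) [Ring R] (M : Type*) [AddCommGroup M] [Module R M] : Prop :=
  ∀ m : M, (∀ f : M →ₗ[R] R, f m = 0) → m = 0


/-! For `x : Fin n → R` with `A = Rx₁ + ⋯ + Rxₙ`, both sides amount to `l.ann (r.ann A) ⊆ A`.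
A linear form on `R ⧸ A` is right multiplication by some `b ∈ r.ann A`, so the class of `r` is
killed by all of them iff `r ∈ l.ann (r.ann A)`. Dually, the annihilator of `x` in `Rᵐᵒᵖ` is
`r.ann A`, so a map `f : xR → R` with `f x = r` exists iff `r ∈ l.ann (r.ann A)`, and since the
linear forms on `Rⁿ` are `v ↦ ∑ cᵢ vᵢ`, it extends to `Rⁿ` iff `r ∈ A`. Adding the generator `0`
takes care of `n ≥ 1`. -/

open Submodule

theorem exists_linearMap_span_singleton_apply_eq {S M N : Type*} [Ring S] [AddCommGroup M]
    [Module S M] [AddCommGroup N] [Module S N] {m : M} {n : N}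
    (h : Ideal.torsionOf S M m ≤ Ideal.torsionOf S N n) :
    ∃ f : (S ∙ m) →ₗ[S] N, f ⟨m, mem_span_singleton_self m⟩ = n := by
  refine ⟨liftQ _ (LinearMap.toSpanSingleton S N n) h ∘ₗ
    (Ideal.quotTorsionOfEquivSpanSingleton S M m).symm.toLinearMap, ?_⟩
  have hm : (Ideal.quotTorsionOfEquivSpanSingleton S M m).symm ⟨m, mem_span_singleton_self m⟩ =
      Submodule.Quotient.mk 1 := by
    rw [LinearEquiv.symm_apply_eq, Ideal.quotTorsionOfEquivSpanSingleton_apply_mk, one_smul]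
  simp only [LinearMap.comp_apply, LinearEquiv.coe_coe, hm]
  exact one_smul S n

theorem Submodule.FG.exists_fin_succ_span_range_eq {R M : Type*} [Semiring R] [AddCommMonoid M]
    [Module R M] {N : Submodule R M} (hN : N.FG) :
    ∃ n, ∃ x : Fin (n + 1) → M, span R (Set.range x) = N := by
  obtain ⟨n, y, hy⟩ := fg_iff_exists_fin_generating_family.1 hN
  exact ⟨n, Fin.cons 0 y, by rw [Fin.range_cons, span_insert_zero, hy]⟩

section

variable {R : Type*} [Ring R]

def rightAnnihilator (s : Set R) : Set R := {b | ∀ a ∈ s, a * b = 0}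

def leftAnnihilator (s : Set R) : Set R := {r | ∀ b ∈ s, r * b = 0}

theorem rightAnnihilator_span (s : Set R) :
    rightAnnihilator (span R s : Set R) = rightAnnihilator s := by
  ext b
  refine ⟨fun hb a ha => hb a (subset_span ha), fun hb a ha => ?_⟩
  have hs : span R s ≤ LinearMap.ker (LinearMap.toSpanSingleton R R b) :=
    span_le.2 fun a ha => by simpa using hb a ha
  simpa using hs ha

theorem forall_linearMap_mkQ_eq_zero_iff (A : Submodule R R) (r : R) :
    (∀ f : (R ⧸ A) →ₗ[R] R, f (A.mkQ r) = 0) ↔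
      r ∈ leftAnnihilator (rightAnnihilator (A : Set R)) := by
  constructor
  · intro h b hb
    have hA : A ≤ LinearMap.ker (LinearMap.toSpanSingleton R R b) := fun a ha => by
      simpa using hb a ha
    simpa using h (A.liftQ _ hA)
  · intro hr f
    have hf : ∀ s : R, f (A.mkQ s) = s * f (A.mkQ 1) := fun s => by
      rw [← smul_eq_mul, ← map_smul, ← map_smul, smul_eq_mul, mul_one]
    rw [hf]
    refine hr _ fun a ha => ?_
    rw [← hf, mkQ_apply, (Quotient.mk_eq_zero A).2 ha, map_zero]

theorem torsionless_quotient_iff (A : Submodule R R) :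
    Torsionless R (R ⧸ A) ↔ leftAnnihilator (rightAnnihilator (A : Set R)) ⊆ A := by
  simp only [Torsionless, A.mkQ_surjective.forall, forall_linearMap_mkQ_eq_zero_iff]
  simp only [mkQ_apply, Quotient.mk_eq_zero]
  rfl

theorem torsionOf_le_torsionOf_iff {ι : Type*} (x : ι → R) (r : R) :
    Ideal.torsionOf Rᵐᵒᵖ (ι → R) x ≤ Ideal.torsionOf Rᵐᵒᵖ R r ↔
      r ∈ leftAnnihilator (rightAnnihilator (Set.range x)) := by
  simp only [SetLike.le_def, Ideal.mem_torsionOf_iff, leftAnnihilator, rightAnnihilator,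
    Set.forall_mem_range, Set.mem_ofPred_eq, funext_iff, Pi.smul_apply,
    MulOpposite.smul_eq_mul_unop, Pi.zero_apply]
  exact ⟨fun h b hb => @h (MulOpposite.op b) hb, fun h c hc => h c.unop hc⟩

theorem exists_linearMap_apply_eq_iff_mem_span {ι : Type*} [Fintype ι] (x : ι → R) (r : R) :
    (∃ g : (ι → R) →ₗ[Rᵐᵒᵖ] R, g x = r) ↔ r ∈ span R (Set.range x) := by
  classical
  rw [mem_span_range_iff_exists_fun]
  constructor
  · rintro ⟨g, rfl⟩
    refine ⟨fun i => g (Pi.single i 1), ?_⟩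
    have hx : x = ∑ i, MulOpposite.op (x i) • Pi.single i 1 := by
      ext j
      simp [Finset.sum_apply, Pi.single_apply]
    conv_rhs => rw [hx]
    simp [map_sum, map_smul]
  · rintro ⟨c, rfl⟩
    exact ⟨∑ i, c i • LinearMap.proj i, by simp⟩

theorem forall_linearMap_span_singleton_extends_iff {ι : Type*} [Fintype ι] (x : ι → R) :
    (∀ f : (Rᵐᵒᵖ ∙ x) →ₗ[Rᵐᵒᵖ] R, ∃ g : (ι → R) →ₗ[Rᵐᵒᵖ] R, ∀ k : Rᵐᵒᵖ ∙ x, g k = f k) ↔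
      leftAnnihilator (rightAnnihilator (Set.range x)) ⊆ span R (Set.range x) := by
  simp only [Set.subset_def, ← torsionOf_le_torsionOf_iff, SetLike.mem_coe,
    ← exists_linearMap_apply_eq_iff_mem_span]
  constructor
  · intro H r hr
    obtain ⟨f, rfl⟩ := exists_linearMap_span_singleton_apply_eq hr
    obtain ⟨g, hg⟩ := H f
    exact ⟨g, hg ⟨x, mem_span_singleton_self x⟩⟩
  · intro H f
    obtain ⟨g, hg⟩ := H (f ⟨x, mem_span_singleton_self x⟩) fun c hc => by
      rw [Ideal.mem_torsionOf_iff, ← map_smul, ← map_zero f]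
      exact congrArg f (Subtype.ext hc)
    refine ⟨g, fun k => ?_⟩
    obtain ⟨c, hc⟩ := mem_span_singleton.1 k.2
    obtain rfl : c • (⟨x, mem_span_singleton_self x⟩ : Rᵐᵒᵖ ∙ x) = k := Subtype.ext hc
    rw [map_smul, coe_smul, map_smul, hg]

end

/-- `R` is right self `(ℵ₀,1)`-injective iff every finitely presented
cyclic left `R`-module (i.e. `R/A` with `A` a finitely generated left ideal)
is torsionless. -/
theorem stmt_5 (R : Type*) [Ring R] :
    RightSelfAleph0OneInjective R ↔
      ∀ A : Submodule R R, A.FG → Torsionless R (R ⧸ A) := by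
  simp only [torsionless_quotient_iff]
  constructor
  · intro H A hA
    obtain ⟨n, x, rfl⟩ := hA.exists_fin_succ_span_range_eq
    rw [rightAnnihilator_span]
    exact (forall_linearMap_span_singleton_extends_iff x).1 (H _ n.succ_pos x)
  · intro H n _ x
    rw [forall_linearMap_span_singleton_extends_iff, ← rightAnnihilator_span]
    exact H _ (fg_span (Set.finite_range x))
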